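/- (Fast convergence theorem, translation-groupoid case.) Let G be a compact topological group with Haar probability measure ν acting continuously on a topological space X, let V be a nontrivial real Banach space, and let λ : G × X → L(V,V) be a continuous map such that: λ(1,x) = id for all x ∈ X; b(λ) := sup_{(g,x)} ‖λ(g,x)‖ is finite; and c(λ) := sup_{g',g,x} ‖λ(g'g, x) − λ(g', g•x)∘λ(g, x)‖ satisfies c(λ) ≤ (1/9)·b(λ)^{−2}. Then the averaging iterates λ^(0) := λ, λ^(i+1)(g,x) := ∫_G λ^(i)(gh, h⁻¹•x)∘(λ^(i)(h, h⁻¹•x))⁻¹ dν(h) are well defined (each λ^(i)(g,x) being invertible), and they converge uniformly on G × X to a continuous map ρ : G × X → L(V,V) satisfying ρ(1,x) = id and ρ(g'g, x) = ρ(g', g•x)∘ρ(g, x) for all g', g ∈ G and x ∈ X. -/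

import Mathlib

open MeasureTheory

/-- The averaging iterates of a pseudo-representation `λ` of the translation
groupoid `G ⋉ X` on the trivial bundle `X × V`, relative to a measure `ν` on `G`:
`λ⁽⁰⁾ := λ` and `λ⁽ⁱ⁺¹⁾(g,x) := ∫ λ⁽ⁱ⁾(gh, h⁻¹•x) ∘ (λ⁽ⁱ⁾(h, h⁻¹•x))⁻¹ dν(h)`
(Bochner integral; the paper's multiplicative averaging formula (10)). -/
noncomputable def iterAvgX {G : Type*} [Group G] [TopologicalSpace G]
    [MeasurableSpace G] {X : Type*} [TopologicalSpace X] [MulAction G X]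
    {V : Type*} [NormedAddCommGroup V] [NormedSpace ℝ V]
    (ν : Measure G) (lam : G × X → V →L[ℝ] V) : ℕ → G × X → V →L[ℝ] V
  | 0 => lam
  | (i + 1) => fun p =>
      ∫ h, ((iterAvgX ν lam i) (p.1 * h, h⁻¹ • p.2)).comp
        ((iterAvgX ν lam i) (h, h⁻¹ • p.2)).inverse ∂ν

/-- `b(λ) := sup_{(g,x)} ‖λ(g,x)‖` for a pseudo-representation of `G ⋉ X`. -/
noncomputable def bSupX {G : Type*} [Group G] {X : Type*} [MulAction G X]
    {V : Type*} [NormedAddCommGroup V] [NormedSpace ℝ V]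
    (lam : G × X → V →L[ℝ] V) : ℝ :=
  ⨆ p : G × X, ‖lam p‖

/-- `c(λ) := sup_{g',g,x} ‖λ(g'g, x) − λ(g', g•x)∘λ(g, x)‖` for a
pseudo-representation of `G ⋉ X`. -/
noncomputable def cSupX {G : Type*} [Group G] {X : Type*} [MulAction G X]
    {V : Type*} [NormedAddCommGroup V] [NormedSpace ℝ V]
    (lam : G × X → V →L[ℝ] V) : ℝ :=
  ⨆ q : (G × G) × X,
    ‖lam (q.1.1 * q.1.2, q.2) - (lam (q.1.1, q.1.2 • q.2)).comp (lam (q.1.2, q.2))‖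

section FastConvergenceAux
namespace FastConvergenceAux1517
variable {G : Type*} [Group G] [TopologicalSpace G] [IsTopologicalGroup G]
    [CompactSpace G] [MeasurableSpace G] [BorelSpace G]
    {X : Type*} [TopologicalSpace X] [MulAction G X] [ContinuousSMul G X]
    {V : Type*} [NormedAddCommGroup V] [NormedSpace ℝ V] [CompleteSpace V]
    [Nontrivial V]

local notation "E" => V →L[ℝ] V

structure IsNice (lam : G × X → V →L[ℝ] V) (b c : ℝ) : Prop where
  cont : Continuous lam
  unital : ∀ x : X, lam (1, x) = ContinuousLinearMap.id ℝ V
  norm_le : ∀ p, ‖lam p‖ ≤ b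
  defect : ∀ (g' g : G) (x : X),
    ‖lam (g' * g, x) - (lam (g', g • x)).comp (lam (g, x))‖ ≤ c
  one_le : 1 ≤ b
  c_nonneg : 0 ≤ c
  small : c * b ^ 2 ≤ 1 / 9

theorem IsNice.c_le {lam : G × X → V →L[ℝ] V} {b c : ℝ} (H : IsNice lam b c) :
    c ≤ 1 / 9 := by
  have h2 : (1:ℝ) ≤ b ^ 2 := one_le_pow₀ H.one_le
  nlinarith [H.small, H.c_nonneg]

/-- Each value of a nice pseudo-representation is a unit, with controlled inverse. -/
theorem IsNice.unit {lam : G × X → V →L[ℝ] V} {b c : ℝ} (H : IsNice lam b c) (p : G × X) :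
    ∃ w : (V →L[ℝ] V)ˣ, (w : V →L[ℝ] V) = lam p ∧
      ‖((w⁻¹ : (V →L[ℝ] V)ˣ) : V →L[ℝ] V)‖ ≤ 9 / 8 * b := by
  obtain ⟨g, x⟩ := p
  set a : E := lam (g⁻¹, g • x) with ha
  set f : E := lam (g, x) with hf
  have hc9 : c ≤ 1 / 9 := H.c_le
  have h1 : ‖(1 : E) - a * f‖ ≤ c := by
    have h := H.defect g⁻¹ g x
    rwa [inv_mul_cancel, H.unital x] at h
  have h2 : ‖(1 : E) - f * a‖ ≤ c := by
    have h := H.defect g g⁻¹ (g • x)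
    rwa [mul_inv_cancel, inv_smul_smul, H.unital (g • x)] at h
  have ht1 : ‖(1 : E) - a * f‖ < 1 := lt_of_le_of_lt h1 (by linarith)
  have ht2 : ‖(1 : E) - f * a‖ < 1 := lt_of_le_of_lt h2 (by linarith)
  set u : Eˣ := Units.oneSub ((1 : E) - a * f) ht1 with hu
  set v : Eˣ := Units.oneSub ((1 : E) - f * a) ht2 with hv
  have huv : (u : E) = a * f := by simp [hu]
  have hvv : (v : E) = f * a := by simp [hv]
  have hui : ‖((u⁻¹ : Eˣ) : E)‖ ≤ (9 : ℝ) / 8 := by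
    have hut : ((u⁻¹ : Eˣ) : E) = ∑' n : ℕ, ((1 : E) - a * f) ^ n := rfl
    have h := tsum_geometric_le_of_norm_lt_one ((1 : E) - a * f) ht1
    rw [norm_one] at h
    have hle : (1 - ‖(1 : E) - a * f‖)⁻¹ ≤ ((8:ℝ)/9)⁻¹ := by
      apply inv_anti₀ (by norm_num) (by linarith)
    rw [hut]
    calc ‖∑' n : ℕ, ((1 : E) - a * f) ^ n‖ ≤ 1 - 1 + (1 - ‖(1 : E) - a * f‖)⁻¹ := h
      _ ≤ ((8:ℝ)/9)⁻¹ := by simpa using hle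
      _ ≤ 9/8 := by norm_num
  -- the two-sided inverse of f
  have hl : ((u⁻¹ : Eˣ) : E) * a * f = 1 := by
    rw [mul_assoc, ← huv, Units.inv_mul]
  have hr : f * (a * ((v⁻¹ : Eˣ) : E)) = 1 := by
    rw [← mul_assoc, ← hvv, Units.mul_inv]
  have heq : ((u⁻¹ : Eˣ) : E) * a = a * ((v⁻¹ : Eˣ) : E) := by
    calc ((u⁻¹ : Eˣ) : E) * a = ((u⁻¹ : Eˣ) : E) * a * (f * (a * ((v⁻¹ : Eˣ) : E))) := by
          rw [hr, mul_one]
      _ = (((u⁻¹ : Eˣ) : E) * a * f) * (a * ((v⁻¹ : Eˣ) : E)) := by rw [← mul_assoc]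
      _ = a * ((v⁻¹ : Eˣ) : E) := by rw [hl, one_mul]
  refine ⟨⟨f, ((u⁻¹ : Eˣ) : E) * a, ?_, ?_⟩, rfl, ?_⟩
  · show f * (((u⁻¹ : Eˣ) : E) * a) = 1
    rw [heq, hr]
  · show (((u⁻¹ : Eˣ) : E) * a) * f = 1
    rw [mul_assoc] at hl ⊢
    exact hl
  · show ‖((u⁻¹ : Eˣ) : E) * a‖ ≤ 9 / 8 * b
    calc ‖((u⁻¹ : Eˣ) : E) * a‖ ≤ ‖((u⁻¹ : Eˣ) : E)‖ * ‖a‖ := norm_mul_le _ _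
      _ ≤ 9 / 8 * b := by
          apply mul_le_mul hui (H.norm_le _) (norm_nonneg _) (by norm_num)


theorem IsNice.exists_equiv {lam : G × X → V →L[ℝ] V} {b c : ℝ} (H : IsNice lam b c)
    (p : G × X) : ∃ e : V ≃L[ℝ] V, lam p = e := by
  obtain ⟨w, hw, -⟩ := H.unit p
  exact ⟨ContinuousLinearEquiv.unitsEquiv ℝ V w, hw.symm⟩

theorem IsNice.inverse_eq {lam : G × X → V →L[ℝ] V} {b c : ℝ} (H : IsNice lam b c)
    {p : G × X} {w : (V →L[ℝ] V)ˣ} (hw : (w : V →L[ℝ] V) = lam p) :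
    (lam p).inverse = ((w⁻¹ : (V →L[ℝ] V)ˣ) : V →L[ℝ] V) := by
  rw [← ContinuousLinearMap.ringInverse_eq_inverse, ← hw, Ring.inverse_unit]

theorem IsNice.inverse_norm_le {lam : G × X → V →L[ℝ] V} {b c : ℝ} (H : IsNice lam b c)
    (p : G × X) : ‖(lam p).inverse‖ ≤ 9 / 8 * b := by
  obtain ⟨w, hw, hb⟩ := H.unit p
  rw [H.inverse_eq hw]; exact hb

theorem IsNice.comp_inverse {lam : G × X → V →L[ℝ] V} {b c : ℝ} (H : IsNice lam b c)
    (p : G × X) : (lam p).comp (lam p).inverse = ContinuousLinearMap.id ℝ V := by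
  obtain ⟨w, hw, -⟩ := H.unit p
  show lam p * (lam p).inverse = 1
  rw [H.inverse_eq hw, ← hw, Units.mul_inv]

theorem IsNice.inverse_comp {lam : G × X → V →L[ℝ] V} {b c : ℝ} (H : IsNice lam b c)
    (p : G × X) : ((lam p).inverse).comp (lam p) = ContinuousLinearMap.id ℝ V := by
  obtain ⟨w, hw, -⟩ := H.unit p
  show (lam p).inverse * lam p = 1
  rw [H.inverse_eq hw, ← hw, Units.inv_mul]

theorem IsNice.inverse_cont {lam : G × X → V →L[ℝ] V} {b c : ℝ} (H : IsNice lam b c) :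
    Continuous fun p => (lam p).inverse := by
  rw [← ContinuousLinearMap.ringInverse_eq_inverse]
  rw [continuous_iff_continuousAt]
  intro p
  obtain ⟨w, hw, -⟩ := H.unit p
  have h1 : ContinuousAt Ring.inverse (lam p) := hw ▸ NormedRing.inverse_continuousAt w
  exact h1.comp H.cont.continuousAt


noncomputable def avg (ν : Measure G) (lam : G × X → V →L[ℝ] V) : G × X → V →L[ℝ] V :=
  fun p => ∫ h, (lam (p.1 * h, h⁻¹ • p.2)).comp ((lam (h, h⁻¹ • p.2)).inverse) ∂ν

theorem cont_aesm {W : Type*} [NormedAddCommGroup W] (ν : Measure G)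
    {f : G → W} (hf : Continuous f) : AEStronglyMeasurable f ν := by
  borelize W
  exact (stronglyMeasurable_iff_measurable_separable.2
    ⟨hf.measurable, (isCompact_range hf).isSeparable⟩).aestronglyMeasurable

theorem cont_integrable {W : Type*} [NormedAddCommGroup W] (ν : Measure G) [IsFiniteMeasure ν]
    {f : G → W} (hf : Continuous f) : Integrable f ν := by
  obtain ⟨C, hC⟩ := (isCompact_range hf.norm).bddAbove
  exact Integrable.mono' (integrable_const C) (cont_aesm ν hf)
    (Filter.Eventually.of_forall fun h => hC (Set.mem_range_self h))

theorem norm_integral_le_of_le {W : Type*} [NormedAddCommGroup W] [NormedSpace ℝ W]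
    (ν : Measure G) [IsProbabilityMeasure ν] {f : G → W} {C : ℝ} (hC : ∀ h, ‖f h‖ ≤ C) :
    ‖∫ h, f h ∂ν‖ ≤ C := by
  have := norm_integral_le_of_norm_le_const (μ := ν) (f := f) (C := C)
    (Filter.Eventually.of_forall hC)
  simpa using this

theorem cont_param_integral {P W : Type*} [TopologicalSpace P] [NormedAddCommGroup W]
    [NormedSpace ℝ W] (ν : Measure G) [IsProbabilityMeasure ν]
    {f : P × G → W} (hf : Continuous f) :
    Continuous fun p => ∫ h, f (p, h) ∂ν := by
  have hI : LipschitzWith 1 fun φ : C(G, W) => ∫ h, φ h ∂ν := by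
    apply LipschitzWith.of_dist_le_mul
    intro φ ψ
    rw [NNReal.coe_one, one_mul, dist_eq_norm, ← integral_sub (cont_integrable ν φ.continuous)
      (cont_integrable ν ψ.continuous)]
    apply norm_integral_le_of_le ν
    intro h
    rw [← dist_eq_norm]
    exact ContinuousMap.dist_apply_le_dist h
  have h2 : Continuous fun p : P => (ContinuousMap.curry ⟨f, hf⟩ p : C(G, W)) :=
    (ContinuousMap.curry ⟨f, hf⟩).continuous
  exact hI.continuous.comp h2

theorem step (ν : Measure G) [ν.IsHaarMeasure] [IsProbabilityMeasure ν]
    {lam : G × X → V →L[ℝ] V} {b c : ℝ} (H : IsNice lam b c) :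
    IsNice (avg ν lam) (b * (1 + 9/8 * c)) (81/16 * (c^2 * b^2)) ∧
    (81/16 * (c^2 * b^2)) * (b * (1 + 9/8 * c))^2 ≤ 3/4 * (c * b^2) ∧
    (∀ p, ‖avg ν lam p - lam p‖ ≤ 9/8 * (c * b)) := by
  have hb0 : (0:ℝ) < b := lt_of_lt_of_le one_pos H.one_le
  have hc9 := H.c_le
  have hc0 := H.c_nonneg
  set β : ℝ := 9/8 * b with hβ
  have hβ0 : 0 ≤ β := by positivity
  set Φ : G × X → G → E := fun p h =>
    (lam (p.1 * h, h⁻¹ • p.2)).comp ((lam (h, h⁻¹ • p.2)).inverse) with hΦ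
  have havg : ∀ p, avg ν lam p = ∫ h, Φ p h ∂ν := fun p => rfl
  have contΦ : Continuous fun q : (G × X) × G => Φ q.1 q.2 := by
    apply Continuous.clm_comp
    · exact H.cont.comp (by fun_prop)
    · exact H.inverse_cont.comp (by fun_prop)
  have contΦp : ∀ p, Continuous (Φ p) := fun p => contΦ.comp (Continuous.prodMk_right p)
  have normΦ : ∀ p h, ‖Φ p h‖ ≤ b * β := by
    intro p h
    calc ‖Φ p h‖ ≤ ‖lam (p.1 * h, h⁻¹ • p.2)‖ * ‖(lam (h, h⁻¹ • p.2)).inverse‖ :=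
        ContinuousLinearMap.opNorm_comp_le _ _
    _ ≤ b * β := mul_le_mul (H.norm_le _) (H.inverse_norm_le _) (norm_nonneg _) hb0.le
  have key1 : ∀ (p : G × X) (h : G), ‖Φ p h - lam p‖ ≤ c * β := by
    rintro ⟨g, x⟩ h
    have hid : ((lam (g, x)).comp (lam (h, h⁻¹ • x))).comp ((lam (h, h⁻¹ • x)).inverse)
        = lam (g, x) := by
      rw [ContinuousLinearMap.comp_assoc, H.comp_inverse, ContinuousLinearMap.comp_id]
    have heq : Φ (g, x) h - lam (g, x)
        = (lam (g * h, h⁻¹ • x) - (lam (g, x)).comp (lam (h, h⁻¹ • x))).comp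
          ((lam (h, h⁻¹ • x)).inverse) := by
      rw [ContinuousLinearMap.sub_comp, hid]
    rw [heq]
    calc ‖_‖ ≤ ‖lam (g * h, h⁻¹ • x) - (lam (g, x)).comp (lam (h, h⁻¹ • x))‖ *
        ‖(lam (h, h⁻¹ • x)).inverse‖ := ContinuousLinearMap.opNorm_comp_le _ _
      _ ≤ c * β := by
        refine mul_le_mul ?_ (H.inverse_norm_le _) (norm_nonneg _) hc0
        have hd := H.defect g h (h⁻¹ • x)
        rwa [smul_inv_smul] at hd
  have intΦ : ∀ p, Integrable (Φ p) ν := fun p => cont_integrable ν (contΦp p)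
  have diff : ∀ p, ‖avg ν lam p - lam p‖ ≤ c * β := by
    intro p
    have h1 : avg ν lam p - lam p = ∫ h, (Φ p h - lam p) ∂ν := by
      rw [integral_sub (intΦ p) (integrable_const _), integral_const]
      simp [measure_univ, havg]
    rw [h1]
    exact norm_integral_le_of_le ν fun h => key1 p h
  have huni : ∀ x : X, avg ν lam (1, x) = ContinuousLinearMap.id ℝ V := by
    intro x
    rw [havg]
    have hid : ∀ h : G, Φ (1, x) h = ContinuousLinearMap.id ℝ V := by
      intro h
      show (lam ((1:G) * h, h⁻¹ • x)).comp _ = _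
      rw [one_mul]
      exact H.comp_inverse (h, h⁻¹ • x)
    simp only [hid]
    simp [measure_univ]
  have hcontavg : Continuous (avg ν lam) := by
    have := cont_param_integral ν contΦ
    exact this
  have hdef : ∀ (g' g : G) (x : X),
      ‖avg ν lam (g' * g, x) - (avg ν lam (g', g • x)).comp (avg ν lam (g, x))‖
        ≤ 2 * (c * β) * (c * β) := by
    intro g' g x
    set A : G → E := fun k => Φ (g', g • x) k with hA
    set D : G → E := fun h => Φ (g, x) h with hD
    set L : E := avg ν lam (g, x) with hL
    set Z : E := lam (g', g • x) with hZ
    have contA : Continuous A := contΦp _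
    have contD : Continuous D := contΦp _
    have contAg : Continuous fun h => A (g * h) :=
      contA.comp (continuous_const.mul continuous_id)
    have cocycle : ∀ h, Φ (g' * g, x) h = (A (g * h)).comp (D h) := by
      intro h
      have hsm : (g * h)⁻¹ • (g • x) = h⁻¹ • x := by
        rw [mul_inv_rev, mul_smul, inv_smul_smul]
      show (lam ((g' * g) * h, h⁻¹ • x)).comp ((lam (h, h⁻¹ • x)).inverse)
          = ((lam (g' * (g * h), (g * h)⁻¹ • (g • x))).comp
            ((lam ((g * h), (g * h)⁻¹ • (g • x))).inverse)).comp
            ((lam (g * h, h⁻¹ • x)).comp ((lam (h, h⁻¹ • x)).inverse))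
      rw [hsm, mul_assoc, ContinuousLinearMap.comp_assoc,
        ← ContinuousLinearMap.comp_assoc ((lam (g * h, h⁻¹ • x)).inverse),
        H.inverse_comp, ContinuousLinearMap.id_comp]
    have intD : Integrable D ν := cont_integrable ν contD
    have hDL : ∫ h, (D h - L) ∂ν = 0 := by
      rw [integral_sub intD (integrable_const _), integral_const]
      simp only [probReal_univ, one_smul]
      rw [sub_eq_zero]
      exact (havg (g, x)).symm
    have intAg : Integrable (fun h => A (g * h)) ν := cont_integrable ν contAg
    have hswap : ∫ h, (A (g * h)).comp L ∂ν = (avg ν lam (g', g • x)).comp L := by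
      have hcc := ContinuousLinearMap.integral_comp_comm
          ((ContinuousLinearMap.compL ℝ V V V).flip L) intAg
      simp only [ContinuousLinearMap.flip_apply, ContinuousLinearMap.compL_apply] at hcc
      rw [hcc, integral_mul_left_eq_self A g]
      rfl
    have hZpart : ∫ h, Z.comp (D h - L) ∂ν = 0 := by
      have hsub : Integrable (fun h => D h - L) ν := intD.sub (integrable_const _)
      have hcc := ContinuousLinearMap.integral_comp_comm
          (ContinuousLinearMap.compL ℝ V V V Z) hsub
      simp only [ContinuousLinearMap.compL_apply] at hcc
      rw [hcc, hDL, ContinuousLinearMap.comp_zero]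
    have hmain : avg ν lam (g' * g, x) - (avg ν lam (g', g • x)).comp L
        = ∫ h, ((A (g * h)) - Z).comp (D h - L) ∂ν := by
      have e1 : avg ν lam (g' * g, x) = ∫ h, (A (g * h)).comp (D h) ∂ν := by
        rw [havg]
        exact integral_congr_ae (Filter.Eventually.of_forall cocycle)
      have intADL : Integrable (fun h => (A (g * h)).comp (D h - L)) ν :=
        cont_integrable ν (contAg.clm_comp (contD.sub continuous_const))
      have intZDL : Integrable (fun h => Z.comp (D h - L)) ν :=
        cont_integrable ν (continuous_const.clm_comp (contD.sub continuous_const))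
      have intAgL : Integrable (fun h => (A (g * h)).comp L) ν :=
        cont_integrable ν (contAg.clm_comp continuous_const)
      calc avg ν lam (g' * g, x) - (avg ν lam (g', g • x)).comp L
          = (∫ h, (A (g * h)).comp (D h) ∂ν) - ∫ h, (A (g * h)).comp L ∂ν := by
            rw [e1, hswap]
        _ = ∫ h, ((A (g * h)).comp (D h) - (A (g * h)).comp L) ∂ν := by
            rw [← integral_sub (cont_integrable ν (contAg.clm_comp contD)) intAgL]
        _ = ∫ h, (A (g * h)).comp (D h - L) ∂ν := by
            simp only [ContinuousLinearMap.comp_sub]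
        _ = (∫ h, (A (g * h)).comp (D h - L) ∂ν) - ∫ h, Z.comp (D h - L) ∂ν := by
            rw [hZpart, sub_zero]
        _ = ∫ h, ((A (g * h)).comp (D h - L) - Z.comp (D h - L)) ∂ν := by
            rw [← integral_sub intADL intZDL]
        _ = ∫ h, ((A (g * h)) - Z).comp (D h - L) ∂ν := by
            simp only [ContinuousLinearMap.sub_comp]
    rw [hmain]
    apply norm_integral_le_of_le ν
    intro h
    have hDhL : ‖D h - L‖ ≤ 2 * (c * β) := by
      have h1 : ‖D h - lam (g, x)‖ ≤ c * β := key1 (g, x) h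
      have h2 : ‖lam (g, x) - L‖ ≤ c * β := by
        rw [norm_sub_rev]; exact diff (g, x)
      calc ‖D h - L‖ = ‖(D h - lam (g, x)) + (lam (g, x) - L)‖ := by abel_nf
        _ ≤ ‖D h - lam (g, x)‖ + ‖lam (g, x) - L‖ := norm_add_le _ _
        _ ≤ 2 * (c * β) := by linarith
    calc ‖(A (g * h) - Z).comp (D h - L)‖ ≤ ‖A (g * h) - Z‖ * ‖D h - L‖ :=
        ContinuousLinearMap.opNorm_comp_le _ _
      _ ≤ (c * β) * (2 * (c * β)) :=
        mul_le_mul (key1 (g', g • x) (g * h)) hDhL (norm_nonneg _) (by positivity)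
      _ = 2 * (c * β) * (c * β) := by ring
  -- arithmetic
  have harith : (81/16 * (c^2 * b^2)) * (b * (1 + 9/8 * c))^2 ≤ 3/4 * (c * b^2) := by
    have h1 : b * (1 + 9/8 * c) ≤ 9/8 * b := by nlinarith
    have h2 : (b * (1 + 9/8 * c))^2 ≤ (9/8 * b)^2 := by
      apply pow_le_pow_left₀ (by positivity) h1
    have h3 : (c * b^2)^2 ≤ (1/9) * (c * b^2) := by
      nlinarith [H.small, mul_nonneg hc0 (sq_nonneg b)]
    calc (81/16 * (c^2 * b^2)) * (b * (1 + 9/8 * c))^2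
        ≤ (81/16 * (c^2 * b^2)) * ((9/8 * b)^2) := by
          apply mul_le_mul_of_nonneg_left h2 (by positivity)
      _ = 6561/1024 * (c * b^2)^2 := by ring
      _ ≤ 6561/1024 * ((1/9) * (c * b^2)) := by
          apply mul_le_mul_of_nonneg_left h3 (by norm_num)
      _ ≤ 3/4 * (c * b^2) := by nlinarith [mul_nonneg hc0 (sq_nonneg b)]
  refine ⟨⟨hcontavg, huni, ?_, ?_, ?_, by positivity, ?_⟩, harith, ?_⟩
  · intro p
    have h1 := diff p
    have h2 := H.norm_le p
    calc ‖avg ν lam p‖ = ‖lam p + (avg ν lam p - lam p)‖ := by congr 1; abel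
      _ ≤ ‖lam p‖ + ‖avg ν lam p - lam p‖ := norm_add_le _ _
      _ ≤ b * (1 + 9/8 * c) := by rw [hβ] at h1; nlinarith
  · intro g' g x
    have h1 := hdef g' g x
    have h2 : 2 * (c * β) * (c * β) ≤ 81/16 * (c^2 * b^2) := by
      rw [hβ]; nlinarith [sq_nonneg (c * b), mul_nonneg hc0 hb0.le]
    linarith
  · calc 1 ≤ b := H.one_le
      _ ≤ b * (1 + 9/8 * c) := by nlinarith
  · calc (81/16 * (c^2 * b^2)) * (b * (1 + 9/8 * c))^2 ≤ 3/4 * (c * b^2) := harith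
      _ ≤ 1/9 := by linarith [H.small, mul_nonneg hc0 (sq_nonneg b)]
  · intro p
    have h1 := diff p
    rw [hβ] at h1
    calc ‖avg ν lam p - lam p‖ ≤ c * (9/8 * b) := h1
      _ = 9/8 * (c * b) := by ring

end FastConvergenceAux1517
end FastConvergenceAux
open FastConvergenceAux1517

/-- Fast convergence theorem I of the paper, translation-groupoid case: the
averaging iterates of a continuous nearly multiplicative pseudo-representation of
`G ⋉ X` (for `G` a compact group) on the trivial bundle `X × V` are well defined
and converge uniformly to a continuous representation. -/
theorem fast_convergence_theorem_translation_groupoid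
    {G : Type*} [Group G] [TopologicalSpace G] [IsTopologicalGroup G]
    [CompactSpace G] [MeasurableSpace G] [BorelSpace G]
    (ν : Measure G) [ν.IsHaarMeasure] [IsProbabilityMeasure ν]
    {X : Type*} [TopologicalSpace X] [Nonempty X] [MulAction G X]
    [ContinuousSMul G X]
    {V : Type*} [NormedAddCommGroup V] [NormedSpace ℝ V] [CompleteSpace V]
    [Nontrivial V]
    (lam : G × X → V →L[ℝ] V) (hcont : Continuous lam)
    (hunital : ∀ x : X, lam (1, x) = ContinuousLinearMap.id ℝ V)
    (hBfin : BddAbove (Set.range fun p : G × X => ‖lam p‖))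
    (hnear : cSupX lam ≤ (1 / 9) * (bSupX lam ^ 2)⁻¹) :
    (∀ (i : ℕ) (p : G × X), ∃ u : V ≃L[ℝ] V, iterAvgX ν lam i p = u) ∧
    ∃ ρ : G × X → V →L[ℝ] V,
      Continuous ρ ∧
      (∀ x : X, ρ (1, x) = ContinuousLinearMap.id ℝ V) ∧
      (∀ (g' g : G) (x : X), ρ (g' * g, x) = (ρ (g', g • x)).comp (ρ (g, x))) ∧
      TendstoUniformly (fun i => iterAvgX ν lam i) ρ Filter.atTop := by
  
  classical
  obtain ⟨x₀⟩ := ‹Nonempty X›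
  set b₀ := bSupX lam with hb₀def
  set c₀ := cSupX lam with hc₀def
  have hbb : ∀ p, ‖lam p‖ ≤ b₀ := fun p => le_ciSup hBfin p
  have hb1 : 1 ≤ b₀ := by
    have h := hbb (1, x₀)
    rwa [hunital x₀, ContinuousLinearMap.norm_id] at h
  have hcbdd : BddAbove (Set.range fun q : (G × G) × X =>
      ‖lam (q.1.1 * q.1.2, q.2) - (lam (q.1.1, q.1.2 • q.2)).comp (lam (q.1.2, q.2))‖) := by
    refine ⟨b₀ + b₀ * b₀, ?_⟩
    rintro y ⟨q, rfl⟩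
    calc ‖lam (q.1.1 * q.1.2, q.2) - (lam (q.1.1, q.1.2 • q.2)).comp (lam (q.1.2, q.2))‖
        ≤ ‖lam (q.1.1 * q.1.2, q.2)‖ +
          ‖(lam (q.1.1, q.1.2 • q.2)).comp (lam (q.1.2, q.2))‖ := norm_sub_le _ _
      _ ≤ b₀ + b₀ * b₀ := by
        have h3 : ‖(lam (q.1.1, q.1.2 • q.2)).comp (lam (q.1.2, q.2))‖ ≤ b₀ * b₀ :=
          le_trans (ContinuousLinearMap.opNorm_comp_le _ _)
            (mul_le_mul (hbb _) (hbb _) (norm_nonneg _) (le_trans zero_le_one hb1))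
        exact add_le_add (hbb _) h3
  have hcc : ∀ (g' g : G) (x : X),
      ‖lam (g' * g, x) - (lam (g', g • x)).comp (lam (g, x))‖ ≤ c₀ :=
    fun g' g x => le_ciSup hcbdd ((g', g), x)
  have hc0' : 0 ≤ c₀ := le_trans (norm_nonneg _) (hcc 1 1 x₀)
  have hsmall : c₀ * b₀ ^ 2 ≤ 1 / 9 := by
    have hb2 : (0:ℝ) < b₀ ^ 2 := by positivity
    calc c₀ * b₀ ^ 2 ≤ (1/9 * (b₀ ^ 2)⁻¹) * b₀ ^ 2 := mul_le_mul_of_nonneg_right hnear hb2.le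
      _ = 1/9 := by field_simp
  have H0 : IsNice lam b₀ c₀ := ⟨hcont, hunital, hbb, hcc, hb1, hc0', hsmall⟩
  set BC : ℕ → ℝ × ℝ := fun i => Nat.rec (b₀, c₀)
    (fun _ q => (q.1 * (1 + 9/8 * q.2), 81/16 * (q.2 ^ 2 * q.1 ^ 2))) i with hBC
  have hBCs : ∀ i, BC (i+1) =
      ((BC i).1 * (1 + 9/8 * (BC i).2), 81/16 * ((BC i).2 ^ 2 * (BC i).1 ^ 2)) := fun i => rfl
  have hiter : ∀ i, iterAvgX ν lam (i+1) = avg ν (iterAvgX ν lam i) := fun i => rfl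
  have main : ∀ i, IsNice (iterAvgX ν lam i) (BC i).1 (BC i).2 ∧
      (BC i).2 * (BC i).1 ^ 2 ≤ (3/4) ^ i * (1/9) := by
    intro i
    induction i with
    | zero => exact ⟨H0, by show c₀ * b₀ ^ 2 ≤ (3/4) ^ 0 * (1/9); simpa using hsmall⟩
    | succ i ih =>
      obtain ⟨hN, hdec⟩ := ih
      obtain ⟨hN', hdec', -⟩ := step ν hN
      constructor
      · rw [hiter i, hBCs i]
        exact hN'
      · rw [hBCs i]
        show (81/16 * ((BC i).2 ^ 2 * (BC i).1 ^ 2)) *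
            ((BC i).1 * (1 + 9/8 * (BC i).2)) ^ 2 ≤ (3/4) ^ (i+1) * (1/9)
        calc (81/16 * ((BC i).2 ^ 2 * (BC i).1 ^ 2)) *
            ((BC i).1 * (1 + 9/8 * (BC i).2)) ^ 2
            ≤ 3/4 * ((BC i).2 * (BC i).1 ^ 2) := hdec'
          _ ≤ 3/4 * ((3/4) ^ i * (1/9)) := by linarith
          _ = (3/4) ^ (i+1) * (1/9) := by ring
  have hB1 : ∀ i, 1 ≤ (BC i).1 := fun i => (main i).1.one_le
  have hC0 : ∀ i, 0 ≤ (BC i).2 := fun i => (main i).1.c_nonneg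
  have hstepdiff : ∀ (i : ℕ) (p : G × X),
      ‖iterAvgX ν lam (i+1) p - iterAvgX ν lam i p‖ ≤ 1/8 * (3/4) ^ i := by
    intro i p
    obtain ⟨-, -, hd⟩ := step ν (main i).1
    have h2 : ‖iterAvgX ν lam (i+1) p - iterAvgX ν lam i p‖
        ≤ 9/8 * ((BC i).2 * (BC i).1) := by rw [hiter i]; exact hd p
    have h3 : (BC i).2 * (BC i).1 ≤ (3/4) ^ i * (1/9) := by
      have h4 := (main i).2
      have hbi : (BC i).1 ≤ (BC i).1 ^ 2 := by nlinarith [hB1 i]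
      nlinarith [hC0 i, hB1 i]
    calc ‖iterAvgX ν lam (i+1) p - iterAvgX ν lam i p‖
        ≤ 9/8 * ((BC i).2 * (BC i).1) := h2
      _ ≤ 9/8 * ((3/4) ^ i * (1/9)) := by linarith
      _ = 1/8 * (3/4) ^ i := by ring
  have hcauchy : ∀ p : G × X, ∃ l : V →L[ℝ] V,
      Filter.Tendsto (fun i => iterAvgX ν lam i p) Filter.atTop (nhds l) := by
    intro p
    apply cauchySeq_tendsto_of_complete
    apply cauchySeq_of_le_geometric (3/4 : ℝ) (1/8) (by norm_num)
    intro n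
    rw [dist_eq_norm, norm_sub_rev]
    exact hstepdiff n p
  choose ρ hρ using hcauchy
  have hdist : ∀ (i : ℕ) (p : G × X), dist (ρ p) (iterAvgX ν lam i p) ≤ 1/2 * (3/4) ^ i := by
    intro i p
    rw [dist_comm]
    have h := dist_le_of_le_geometric_of_tendsto (3/4) (1/8) (by norm_num)
      (fun n => by rw [dist_eq_norm, norm_sub_rev]; exact hstepdiff n p) (hρ p) i
    calc dist (iterAvgX ν lam i p) (ρ p) ≤ 1/8 * (3/4) ^ i / (1 - 3/4) := h
      _ = 1/2 * (3/4) ^ i := by ring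
  have huc : TendstoUniformly (fun i => iterAvgX ν lam i) ρ Filter.atTop := by
    rw [Metric.tendstoUniformly_iff]
    intro ε hε
    have hlim : Filter.Tendsto (fun i : ℕ => 1/2 * (3/4:ℝ) ^ i) Filter.atTop (nhds 0) := by
      have h := tendsto_pow_atTop_nhds_zero_of_lt_one (by norm_num : (0:ℝ) ≤ 3/4)
        (by norm_num : (3/4:ℝ) < 1)
      simpa using h.const_mul (1/2 : ℝ)
    filter_upwards [hlim.eventually (gt_mem_nhds hε)] with i hi p
    exact lt_of_le_of_lt (hdist i p) hi
  have hρcont : Continuous ρ :=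
    huc.continuous (Filter.Eventually.of_forall fun i => (main i).1.cont).frequently
  have hρ1 : ∀ x : X, ρ (1, x) = ContinuousLinearMap.id ℝ V := by
    intro x
    have h1 : ∀ i, iterAvgX ν lam i (1, x) = ContinuousLinearMap.id ℝ V :=
      fun i => (main i).1.unital x
    have h2 := hρ (1, x)
    simp only [h1] at h2
    exact (tendsto_nhds_unique h2 tendsto_const_nhds)
  have hCle : ∀ i, (BC i).2 ≤ (3/4) ^ i * (1/9) := by
    intro i
    have h1 : (BC i).2 * 1 ≤ (BC i).2 * (BC i).1 ^ 2 :=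
      mul_le_mul_of_nonneg_left (one_le_pow₀ (hB1 i)) (hC0 i)
    have h2 := (main i).2
    linarith
  have hρmul : ∀ (g' g : G) (x : X), ρ (g' * g, x) = (ρ (g', g • x)).comp (ρ (g, x)) := by
    intro g' g x
    have hmul : Filter.Tendsto (fun i => (iterAvgX ν lam i (g', g • x)) *
        (iterAvgX ν lam i (g, x))) Filter.atTop (nhds ((ρ (g', g • x)) * (ρ (g, x)))) :=
      (hρ _).mul (hρ _)
    have h1 : Filter.Tendsto (fun i => iterAvgX ν lam i (g' * g, x)
        - (iterAvgX ν lam i (g', g • x)).comp (iterAvgX ν lam i (g, x))) Filter.atTop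
        (nhds (ρ (g' * g, x) - (ρ (g', g • x)).comp (ρ (g, x)))) := (hρ _).sub hmul
    have hlim0 : Filter.Tendsto (fun i : ℕ => (3/4:ℝ) ^ i * (1/9)) Filter.atTop (nhds 0) := by
      have h := tendsto_pow_atTop_nhds_zero_of_lt_one (by norm_num : (0:ℝ) ≤ 3/4)
        (by norm_num : (3/4:ℝ) < 1)
      simpa using h.mul_const (1/9 : ℝ)
    have h3 : ‖ρ (g' * g, x) - (ρ (g', g • x)).comp (ρ (g, x))‖ ≤ 0 := by
      apply le_of_tendsto_of_tendsto' h1.norm hlim0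
      intro i
      exact le_trans ((main i).1.defect g' g x) (hCle i)
    have h4 : ρ (g' * g, x) - (ρ (g', g • x)).comp (ρ (g, x)) = 0 :=
      norm_le_zero_iff.mp h3
    rw [sub_eq_zero] at h4
    exact h4
  exact ⟨fun i p => (main i).1.exists_equiv p, ρ, hρcont, hρ1, hρmul, huc⟩
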